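/- Let H ∈ C²(M), Ω₀ a connected component of H^{−1}((h₀,h₁)) with |∇H| ≥ c₀ > 0 on it, and X the flow of b = ∇⊥H. Then there is a constant C (depending on H, Ω₀) such that for every x, y ∈ Ω₀ and t ≥ 0: d_M(X(t,x), X(t,y)) ≤ C·(1+t)·d_M(x,y), i.e. the flow map restricted to Ω₀ has Lipschitz constant growing at most linearly in time. -/

import Mathlib

open Real Set

/-- The perpendicular gradient `∇⊥H = (−∂₂H, ∂₁H)`. -/
noncomputable def perpGrad (H : EuclideanSpace ℝ (Fin 2) → ℝ) (x : EuclideanSpace ℝ (Fin 2)) :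
    EuclideanSpace ℝ (Fin 2) :=
  (WithLp.equiv 2 (Fin 2 → ℝ)).symm ![-(gradient H x 1), gradient H x 0]

/-!
Along the flow of `b = ∇⊥H` the energy `H` is conserved and the speed `‖b‖ = ‖∇H‖` lies in
`[c₀, Λ]`. Near the orbit of `x`, the distance from a point `w` to the foot `X θ x` of the
normal through `w` is controlled by the energy gap, `c₀ ‖w - X θ x‖ ≤ 2 |H w - H x|`, because
`H` grows at rate `‖∇H‖ ≥ c₀` along that normal. Hence the orbit of a nearby `y` stays within
`2 |H y - H x| / c₀ = O(dist x y)` of the orbit of `x` up to a phase shift. Re-projecting at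
every integer time `k` (a zero of `θ ↦ ⟪X k y - X θ x, b (X θ x)⟫`, found by the intermediate
value theorem) moves the phase by `O(dist x y)`, while over a unit time Gronwall only costs the
fixed factor `exp L`, `L` a Lipschitz constant of `b`. The phase error therefore grows linearly
in time, which gives the bound for nearby points; far apart points are handled by the
boundedness of `Ω₀`.
-/

open scoped RealInnerProductSpace NNReal Gradient

local notation "ℝ²" => EuclideanSpace ℝ (Fin 2)

theorem exists_mem_Icc_eq_zero_of_hasDerivAt_le_neg {g g' : ℝ → ℝ} {a β c : ℝ} (hβ : 0 ≤ β)
    (hg : ∀ θ ∈ Icc (a - β) (a + β), HasDerivAt g (g' θ) θ)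
    (hg' : ∀ θ ∈ Icc (a - β) (a + β), g' θ ≤ -c) (ha : |g a| ≤ c * β) :
    ∃ θ ∈ Icc (a - β) (a + β), g θ = 0 := by
  have hcont : ContinuousOn g (Icc (a - β) (a + β)) := fun θ hθ ↦
    (hg θ hθ).continuousAt.continuousWithinAt
  have hdrop : ∀ u ∈ Icc (a - β) (a + β), ∀ v ∈ Icc (a - β) (a + β), u ≤ v →
      g v - g u ≤ -c * (v - u) := by
    refine (convex_Icc _ _).image_sub_le_mul_sub_of_deriv_le hcont
      (fun θ hθ ↦ (hg θ (interior_subset hθ)).differentiableAt.differentiableWithinAt)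
      (fun θ hθ ↦ ?_)
    rw [(hg θ (interior_subset hθ)).deriv]
    exact hg' θ (interior_subset hθ)
  have ha_mem : a ∈ Icc (a - β) (a + β) := ⟨by linarith, by linarith⟩
  have h₁ := hdrop a ha_mem (a + β) ⟨by linarith, le_rfl⟩ (by linarith)
  have h₂ := hdrop (a - β) ⟨le_rfl, by linarith⟩ a ha_mem (by linarith)
  have := abs_le.1 ha
  exact intermediate_value_Icc' (by linarith) hcont ⟨by linarith, by linarith⟩

theorem exists_pos_dist_le_mul_one_add_of_isBounded {α : Type*} [PseudoMetricSpace α]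
    {f : ℝ → α → α} {s : Set α} (hs : Bornology.IsBounded s) (hf : ∀ t, MapsTo (f t) s s)
    {δ C : ℝ} (hδ : 0 < δ)
    (hloc : ∀ x ∈ s, ∀ y ∈ s, dist x y ≤ δ → ∀ t, 0 ≤ t →
      dist (f t x) (f t y) ≤ C * (1 + t) * dist x y) :
    ∃ C' > 0, ∀ x ∈ s, ∀ y ∈ s, ∀ t, 0 ≤ t → dist (f t x) (f t y) ≤ C' * (1 + t) * dist x y := by
  have hdiam : 0 ≤ Metric.diam s / δ := div_nonneg Metric.diam_nonneg hδ.le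
  refine ⟨|C| + Metric.diam s / δ + 1, by positivity, fun x hx y hy t ht ↦ ?_⟩
  rcases le_or_gt (dist x y) δ with hxy | hxy
  · refine (hloc x hx y hy hxy t ht).trans ?_
    gcongr
    linarith [le_abs_self C]
  · calc dist (f t x) (f t y) ≤ Metric.diam s :=
          Metric.dist_le_diam_of_mem hs (hf t hx) (hf t hy)
      _ = Metric.diam s / δ * δ := by field_simp
      _ ≤ (|C| + Metric.diam s / δ + 1) * (1 + t) * dist x y := by
          rw [mul_assoc]
          gcongr
          · nlinarith [abs_nonneg C]
          · nlinarith [dist_nonneg (x := x) (y := y)]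

section Derivative

variable {E F : Type*} [NormedAddCommGroup E] [NormedAddCommGroup F] [NormedSpace ℝ F]

theorem ContDiff.exists_norm_fderiv_le_and_lipschitzOnWith [NormedSpace ℝ E] {f : E → F}
    (hf : ContDiff ℝ 1 f) {K : Set E} (hK : IsCompact K) (hKc : Convex ℝ K) :
    ∃ C : ℝ≥0, (∀ z ∈ K, ‖fderiv ℝ f z‖ ≤ C) ∧ LipschitzOnWith C f K := by
  obtain ⟨C, hC⟩ := hK.bddAbove_image (f := fun z ↦ ‖fderiv ℝ f z‖₊)
    (hf.continuous_fderiv one_ne_zero).nnnorm.continuousOn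
  have hbound : ∀ z ∈ K, ‖fderiv ℝ f z‖₊ ≤ C := fun z hz ↦ hC ⟨z, hz, rfl⟩
  exact ⟨C, fun z hz ↦ hbound z hz,
    hKc.lipschitzOnWith_of_nnnorm_fderiv_le (fun z _ ↦ hf.differentiable one_ne_zero z) hbound⟩

variable [InnerProductSpace ℝ E] [CompleteSpace E]

theorem ContDiff.gradient {f : E → ℝ} {m n : WithTop ℕ∞} (hf : ContDiff ℝ n f)
    (hmn : m + 1 ≤ n) : ContDiff ℝ m (∇ f) :=
  (InnerProductSpace.toDual ℝ E).symm.contDiff.comp (hf.fderiv_right hmn)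

theorem norm_gradient (f : E → ℝ) (x : E) : ‖∇ f x‖ = ‖fderiv ℝ f x‖ := by
  rw [← toDual_gradient, LinearIsometryEquiv.norm_map]

theorem abs_sub_sub_inner_gradient_le {f : E → ℝ} {K : Set E} (hK : Convex ℝ K)
    (hf : ∀ z ∈ K, DifferentiableAt ℝ f z) {M : ℝ≥0} (hM : LipschitzOnWith M (∇ f) K)
    {p w : E} (hp : p ∈ K) (hw : w ∈ K) : |f w - f p - ⟪∇ f p, w - p⟫| ≤ M * ‖w - p‖ ^ 2 := by
  have hbound : ∀ z ∈ segment ℝ p w,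
      ‖fderiv ℝ f z - InnerProductSpace.toDual ℝ E (∇ f p)‖ ≤ M * ‖w - p‖ := fun z hz ↦ by
    rw [← toDual_gradient, ← map_sub, LinearIsometryEquiv.norm_map, ← dist_eq_norm,
      ← dist_eq_norm]
    calc dist (∇ f z) (∇ f p) ≤ M * dist z p :=
          hM.dist_le_mul z (hK.segment_subset hp hw hz) p hp
      _ ≤ M * dist w p := by
        gcongr
        linarith [dist_add_dist_of_mem_segment hz, dist_nonneg (x := z) (y := w), dist_comm z p,
          dist_comm w p]
  have := (convex_segment p w).norm_image_sub_le_of_norm_fderiv_le'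
    (fun z hz ↦ hf z (hK.segment_subset hp hw hz)) hbound (left_mem_segment ℝ p w)
    (right_mem_segment ℝ p w)
  rw [InnerProductSpace.toDual_apply_apply, Real.norm_eq_abs] at this
  nlinarith [this]

end Derivative

def PhaseCorrectable {E : Type*} [PseudoMetricSpace E] (X : ℝ → E → E) (x y : E) (κ ε ρ : ℝ) :
    Prop :=
  ∀ s θ η, dist (X s y) (X θ x) ≤ η → η ≤ ε → ∃ θ', |θ' - θ| ≤ κ * η ∧ dist (X s y) (X θ' x) ≤ ρ

structure IsInvariantFlow {E : Type*} [NormedAddCommGroup E] [NormedSpace ℝ E] (b : E → E)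
    (X : ℝ → E → E) (Ω : Set E) : Prop where
  hasDerivAt : ∀ x ∈ Ω, ∀ t, HasDerivAt (fun s ↦ X s x) (b (X t x)) t
  mapsTo : ∀ t, MapsTo (X t) Ω Ω
  zero : ∀ x ∈ Ω, X 0 x = x

namespace IsInvariantFlow

variable {E : Type*} [NormedAddCommGroup E]

section NormedSpace

variable [NormedSpace ℝ E] {b : E → E} {X : ℝ → E → E} {Ω : Set E} {x y : E}

theorem dist_le_mul_abs (hX : IsInvariantFlow b X Ω) (hx : x ∈ Ω) {Λ : ℝ}
    (hΛ : ∀ z ∈ Ω, ‖b z‖ ≤ Λ) (s t : ℝ) : dist (X s x) (X t x) ≤ Λ * |s - t| := by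
  simpa [dist_eq_norm, Real.norm_eq_abs] using
    convex_univ.norm_image_sub_le_of_norm_hasDerivWithin_le
      (fun u _ ↦ (hX.hasDerivAt x hx u).hasDerivWithinAt)
      (fun u _ ↦ hΛ _ (hX.mapsTo u hx)) (mem_univ t) (mem_univ s)

theorem dist_add_le_mul_exp (hX : IsInvariantFlow b X Ω) (hx : x ∈ Ω) (hy : y ∈ Ω) {L : ℝ≥0}
    (hL : LipschitzOnWith L b Ω) (a θ : ℝ) {s : ℝ} (hs : 0 ≤ s) :
    dist (X (a + s) y) (X (θ + s) x) ≤ dist (X a y) (X θ x) * exp (L * s) := by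
  have hshift : ∀ z ∈ Ω, ∀ c σ : ℝ, HasDerivAt (fun σ ↦ X (c + σ) z) (b (X (c + σ) z)) σ :=
    fun z hz c σ ↦ HasDerivAt.comp_const_add c σ (hX.hasDerivAt z hz (c + σ))
  simpa using dist_le_of_trajectories_ODE_of_mem (v := fun _ ↦ b) (s := fun _ ↦ Ω)
    (a := 0) (b := s) (fun _ _ ↦ hL)
    (fun σ _ ↦ (hshift y hy a σ).continuousAt.continuousWithinAt)
    (fun σ _ ↦ (hshift y hy a σ).hasDerivWithinAt) (fun σ _ ↦ hX.mapsTo _ hy)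
    (fun σ _ ↦ (hshift x hx θ σ).continuousAt.continuousWithinAt)
    (fun σ _ ↦ (hshift x hx θ σ).hasDerivWithinAt) (fun σ _ ↦ hX.mapsTo _ hx)
    (by simp : dist (X (a + 0) y) (X (θ + 0) x) ≤ dist (X a y) (X θ x)) s ⟨hs, le_rfl⟩

theorem exists_dist_le_of_phaseCorrectable (hX : IsInvariantFlow b X Ω) (hx : x ∈ Ω)
    (hy : y ∈ Ω) {L : ℝ≥0} (hL : LipschitzOnWith L b Ω) {κ ε ρ : ℝ}
    (hcorr : PhaseCorrectable X x y κ ε ρ)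
    (hyx : dist y x ≤ ε) (hρ : exp L * ρ ≤ ε) (k : ℕ) :
    ∃ θ, dist (X k y) (X θ x) ≤ ρ ∧ |θ - k| ≤ κ * (dist y x + k * (exp L * ρ)) := by
  induction k with
  | zero =>
    obtain ⟨θ, hθ, hdist⟩ := hcorr 0 0 (dist y x) (by rw [hX.zero x hx, hX.zero y hy]) hyx
    exact ⟨θ, by simpa using hdist, by simpa using hθ⟩
  | succ k ih =>
    obtain ⟨θ, hdist, hθ⟩ := ih
    have hflow : dist (X (k + 1) y) (X (θ + 1) x) ≤ exp L * ρ := by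
      have := hX.dist_add_le_mul_exp hx hy hL k θ zero_le_one
      rw [mul_one] at this
      nlinarith [exp_pos L]
    obtain ⟨θ', hθ', hdist'⟩ := hcorr _ _ _ hflow hρ
    refine ⟨θ', by exact_mod_cast hdist', ?_⟩
    have := abs_sub_le θ' (θ + 1) (k + 1)
    rw [show θ + 1 - (k + 1) = θ - k by ring] at this
    push_cast
    linarith

theorem dist_le_of_phaseCorrectable (hX : IsInvariantFlow b X Ω) (hx : x ∈ Ω) (hy : y ∈ Ω)
    {Λ : ℝ} (hΛ : ∀ z ∈ Ω, ‖b z‖ ≤ Λ) {L : ℝ≥0} (hL : LipschitzOnWith L b Ω) {κ ε ρ : ℝ}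
    (hκ : 0 ≤ κ) (hcorr : PhaseCorrectable X x y κ ε ρ)
    (hyx : dist y x ≤ ε) (hρ : exp L * ρ ≤ ε) {t : ℝ} (ht : 0 ≤ t) :
    dist (X t y) (X t x) ≤ exp L * ρ + Λ * κ * (dist y x + t * (exp L * ρ)) := by
  set k := ⌊t⌋₊
  obtain ⟨θ, hdist, hθ⟩ := hX.exists_dist_le_of_phaseCorrectable hx hy hL hcorr hyx hρ k
  have hkt : (k : ℝ) ≤ t := Nat.floor_le ht
  have hs : t - k ≤ 1 := by linarith [Nat.lt_floor_add_one t]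
  have hΛ0 : 0 ≤ Λ := (norm_nonneg _).trans (hΛ _ hx)
  have hρ0 : 0 ≤ ρ := dist_nonneg.trans hdist
  have hy' : dist (X t y) (X (θ + (t - k)) x) ≤ exp L * ρ := by
    have h := hX.dist_add_le_mul_exp hx hy hL k θ (sub_nonneg.2 hkt)
    rw [add_sub_cancel] at h
    have : exp (L * (t - k)) ≤ exp L :=
      exp_le_exp.2 (mul_le_of_le_one_right L.coe_nonneg hs)
    nlinarith [exp_pos (L * (t - k))]
  have hx' : dist (X (θ + (t - k)) x) (X t x) ≤ Λ * |θ - k| := by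
    simpa [show θ + (t - k) - t = θ - k by ring] using hX.dist_le_mul_abs hx hΛ (θ + (t - k)) t
  have hk : Λ * |θ - k| ≤ Λ * κ * (dist y x + t * (exp L * ρ)) := by
    have : (k : ℝ) * (exp L * ρ) ≤ t * (exp L * ρ) :=
      mul_le_mul_of_nonneg_right hkt (by positivity)
    calc Λ * |θ - k| ≤ Λ * (κ * (dist y x + k * (exp L * ρ))) :=
          mul_le_mul_of_nonneg_left hθ hΛ0
      _ ≤ Λ * κ * (dist y x + t * (exp L * ρ)) := by
          rw [← mul_assoc]; gcongr
  linarith [dist_triangle (X t y) (X (θ + (t - k)) x) (X t x)]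

end NormedSpace

variable [InnerProductSpace ℝ E] {b : E → E} {X : ℝ → E → E} {Ω : Set E} {x : E}

theorem exists_abs_sub_le_inner_sub_eq_zero (hX : IsInvariantFlow b X Ω)
    (hx : x ∈ Ω) {w : E} {Λ L c η β θg : ℝ} (hΛ : ∀ z ∈ Ω, ‖b z‖ ≤ Λ)
    (hc : ∀ z ∈ Ω, c ≤ ‖b z‖ ^ 2) (hb : ∀ z ∈ Ω, DifferentiableAt ℝ b z)
    (hL : ∀ z ∈ Ω, ‖fderiv ℝ b z‖ ≤ L) (hw : dist w (X θg x) ≤ η) (hβ : 0 ≤ β)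
    (hηβ : 2 * Λ * η ≤ c * β) (hsmall : 2 * L * Λ * (η + Λ * β) ≤ c) :
    ∃ θ, |θ - θg| ≤ β ∧ ⟪w - X θ x, b (X θ x)⟫ = 0 ∧ ‖w - X θ x‖ ≤ η + Λ * β := by
  set I := Icc (θg - β) (θg + β)
  have hmem : ∀ θ, X θ x ∈ Ω := fun θ ↦ hX.mapsTo θ hx
  have hL0 : 0 ≤ L := (norm_nonneg _).trans (hL _ hx)
  have hnear : ∀ θ ∈ I, ‖w - X θ x‖ ≤ η + Λ * β := fun θ hθ ↦ by
    have := hX.dist_le_mul_abs hx hΛ θg θ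
    have : |θg - θ| ≤ β := abs_le.2 ⟨by linarith [hθ.2], by linarith [hθ.1]⟩
    rw [← dist_eq_norm]
    nlinarith [dist_triangle w (X θg x) (X θ x), (norm_nonneg _).trans (hΛ _ hx)]
  have hderiv : ∀ θ, HasDerivAt (fun θ ↦ ⟪w - X θ x, b (X θ x)⟫)
      (⟪w - X θ x, fderiv ℝ b (X θ x) (b (X θ x))⟫ + ⟪-b (X θ x), b (X θ x)⟫) θ := fun θ ↦ by
    have hflow := hX.hasDerivAt x hx θ
    simpa using ((hasDerivAt_const θ w).sub hflow).inner ℝ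
      ((hb _ (hmem θ)).hasFDerivAt.comp_hasDerivAt θ hflow)
  -- On `I` the term `-‖b‖² ≤ -c` dominates, so the inner product decreases at rate `≥ c / 2`.
  refine (exists_mem_Icc_eq_zero_of_hasDerivAt_le_neg (a := θg) (c := c / 2) hβ
    (fun θ _ ↦ hderiv θ) (fun θ hθ ↦ ?_) ?_).imp
    fun θ ⟨hθ, h0⟩ ↦ ⟨abs_le.2 ⟨by linarith [hθ.1], by linarith [hθ.2]⟩, h0, hnear θ hθ⟩
  · have hDb : ‖fderiv ℝ b (X θ x) (b (X θ x))‖ ≤ L * Λ :=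
      ((fderiv ℝ b _).le_opNorm _).trans
        (mul_le_mul (hL _ (hmem θ)) (hΛ _ (hmem θ)) (norm_nonneg _) hL0)
    have := (real_inner_le_norm _ _).trans
      (mul_le_mul (hnear θ hθ) hDb (norm_nonneg _) ((norm_nonneg _).trans (hnear θ hθ)))
    rw [inner_neg_left, real_inner_self_eq_norm_sq]
    nlinarith [hc _ (hmem θ)]
  · have := (abs_real_inner_le_norm _ _).trans
      (mul_le_mul (dist_eq_norm w (X θg x) ▸ hw) (hΛ _ (hmem θg)) (norm_nonneg _)
        (dist_nonneg.trans hw))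
    linarith

theorem apply_eq_of_inner_gradient_eq_zero [CompleteSpace E] (hX : IsInvariantFlow b X Ω)
    {H : E → ℝ} (hH : ∀ z ∈ Ω, DifferentiableAt ℝ H z) (hb : ∀ z ∈ Ω, ⟪∇ H z, b z⟫ = 0)
    (hx : x ∈ Ω) (t : ℝ) : H (X t x) = H x := by
  have hderiv : ∀ s, HasDerivAt (fun s ↦ H (X s x)) 0 s := fun s ↦ by
    have := (hH _ (hX.mapsTo s hx)).hasFDerivAt.comp_hasDerivAt s (hX.hasDerivAt x hx s)
    rwa [← inner_gradient_left, hb _ (hX.mapsTo s hx)] at this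
  have := is_const_of_deriv_eq_zero (fun s ↦ (hderiv s).differentiableAt)
    (fun s ↦ (hderiv s).deriv) t 0
  simpa [hX.zero x hx] using this

end IsInvariantFlow

section PerpGrad

variable (H : ℝ² → ℝ) (x : ℝ²)

theorem perpGrad_apply_zero : perpGrad H x 0 = -∇ H x 1 := rfl

theorem perpGrad_apply_one : perpGrad H x 1 = ∇ H x 0 := rfl

theorem EuclideanSpace.inner_eq_fin_two (u v : ℝ²) : ⟪u, v⟫ = u 0 * v 0 + u 1 * v 1 := by
  simp [PiLp.inner_apply, Fin.sum_univ_two, mul_comm]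

theorem inner_gradient_perpGrad : ⟪∇ H x, perpGrad H x⟫ = 0 := by
  rw [EuclideanSpace.inner_eq_fin_two, perpGrad_apply_zero, perpGrad_apply_one]
  ring

theorem norm_perpGrad : ‖perpGrad H x‖ = ‖∇ H x‖ := by
  simp [perpGrad, EuclideanSpace.norm_eq, Fin.sum_univ_two, add_comm]

theorem inner_gradient_sq_add_inner_perpGrad_sq (z : ℝ²) :
    ⟪∇ H x, z⟫ ^ 2 + ⟪z, perpGrad H x⟫ ^ 2 = ‖∇ H x‖ ^ 2 * ‖z‖ ^ 2 := by
  simp only [← real_inner_self_eq_norm_sq, EuclideanSpace.inner_eq_fin_two, perpGrad_apply_zero,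
    perpGrad_apply_one]
  ring

variable {H}

theorem ContDiff.perpGrad {m n : WithTop ℕ∞} (hH : ContDiff ℝ n H) (hmn : m + 1 ≤ n) :
    ContDiff ℝ m (perpGrad H) := by
  have hgrad := (contDiff_piLp 2).1 (hH.gradient hmn)
  refine (contDiff_piLp 2).2 fun i ↦ ?_
  fin_cases i
  exacts [(hgrad 1).neg, hgrad 0]

theorem mul_norm_sub_le_of_inner_perpGrad_eq_zero {p w : ℝ²} {c₀ M : ℝ} (hp : c₀ ≤ ‖∇ H p‖)
    (htaylor : |H w - H p - ⟪∇ H p, w - p⟫| ≤ M * ‖w - p‖ ^ 2)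
    (horth : ⟪w - p, perpGrad H p⟫ = 0) (hsmall : 2 * M * ‖w - p‖ ≤ c₀) :
    c₀ * ‖w - p‖ ≤ 2 * |H w - H p| := by
  have hinner : |⟪∇ H p, w - p⟫| = ‖∇ H p‖ * ‖w - p‖ := by
    have := inner_gradient_sq_add_inner_perpGrad_sq H p (w - p)
    rw [horth, zero_pow two_ne_zero, add_zero, ← mul_pow] at this
    rw [← sqrt_sq_eq_abs, this, sqrt_sq (by positivity)]
  have := abs_sub (H w - H p) (H w - H p - ⟪∇ H p, w - p⟫)
  rw [sub_sub_cancel, hinner] at this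
  nlinarith [mul_le_mul_of_nonneg_right hp (norm_nonneg (w - p)),
    mul_le_mul_of_nonneg_right hsmall (norm_nonneg (w - p))]

end PerpGrad

namespace IsInvariantFlow

variable {H : ℝ² → ℝ} {X : ℝ → ℝ² → ℝ²} {Ω : Set ℝ²} {c₀ : ℝ}

theorem phaseCorrectable_perpGrad (hX : IsInvariantFlow (perpGrad H) X Ω) (hH : ContDiff ℝ 2 H)
    (hc₀ : 0 < c₀) (hgrad : ∀ z ∈ Ω, c₀ ≤ ‖∇ H z‖) {Λ D ε : ℝ} (hΛ : ∀ z ∈ Ω, ‖∇ H z‖ ≤ Λ)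
    (hD : ∀ z ∈ Ω, ‖fderiv ℝ (perpGrad H) z‖ ≤ D) {M : ℝ≥0}
    (htaylor : ∀ p ∈ Ω, ∀ w ∈ Ω, |H w - H p - ⟪∇ H p, w - p⟫| ≤ M * ‖w - p‖ ^ 2)
    (hε₁ : 2 * D * Λ * (c₀ ^ 2 + 2 * Λ ^ 2) * ε ≤ c₀ ^ 4)
    (hε₂ : 2 * M * (c₀ ^ 2 + 2 * Λ ^ 2) * ε ≤ c₀ ^ 3) {x y : ℝ²} (hx : x ∈ Ω) (hy : y ∈ Ω) :
    PhaseCorrectable X x y (2 * Λ / c₀ ^ 2) ε (2 * |H y - H x| / c₀) := by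
  intro s θg η hη hηε
  have hconserved : ∀ z ∈ Ω, ∀ t, H (X t z) = H z := fun z hz t ↦
    hX.apply_eq_of_inner_gradient_eq_zero (fun z _ ↦ hH.differentiable two_ne_zero z)
      (fun z _ ↦ inner_gradient_perpGrad H z) hz t
  have hΛ0 : 0 ≤ Λ := (norm_nonneg _).trans (hΛ x hx)
  have hD0 : 0 ≤ D := (norm_nonneg _).trans (hD x hx)
  have hnear : η + Λ * (2 * Λ / c₀ ^ 2 * η) = (c₀ ^ 2 + 2 * Λ ^ 2) * η / c₀ ^ 2 := by
    field_simp
  obtain ⟨θ, hθ, horth, hdist⟩ := hX.exists_abs_sub_le_inner_sub_eq_zero hx (c := c₀ ^ 2)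
    (β := 2 * Λ / c₀ ^ 2 * η) (fun z hz ↦ norm_perpGrad H z ▸ hΛ z hz)
    (fun z hz ↦ norm_perpGrad H z ▸ pow_le_pow_left₀ hc₀.le (hgrad z hz) 2)
    (fun z _ ↦ (hH.perpGrad (m := 1) (by norm_num)).differentiable one_ne_zero z) hD hη
    (mul_nonneg (div_nonneg (by linarith) (by positivity)) (dist_nonneg.trans hη))
    (le_of_eq (by field_simp)) (by
      rw [hnear, mul_div_assoc', div_le_iff₀ (by positivity)]
      nlinarith [mul_le_mul_of_nonneg_left hηε
        (mul_nonneg (mul_nonneg (mul_nonneg zero_le_two hD0) hΛ0) (by positivity))])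
  have hw := hX.mapsTo s hy
  rw [hnear] at hdist
  have hsmall : 2 * M * ‖X s y - X θ x‖ ≤ c₀ := by
    have := mul_le_mul_of_nonneg_left hdist (by positivity : (0 : ℝ) ≤ 2 * M)
    rw [mul_div_assoc', le_div_iff₀ (by positivity)] at this
    refine le_of_mul_le_mul_right (a := c₀ ^ 2) ?_ (by positivity)
    nlinarith [mul_le_mul_of_nonneg_left hηε
      (by positivity : (0 : ℝ) ≤ 2 * M * (c₀ ^ 2 + 2 * Λ ^ 2))]
  have := mul_norm_sub_le_of_inner_perpGrad_eq_zero (hgrad _ (hX.mapsTo θ hx))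
    (htaylor _ (hX.mapsTo θ hx) _ hw) horth hsmall
  rw [hconserved y hy, hconserved x hx] at this
  refine ⟨θ, hθ, ?_⟩
  rw [le_div_iff₀ hc₀, dist_eq_norm, mul_comm]
  exact this

theorem exists_dist_le_mul_one_add_of_dist_le (hX : IsInvariantFlow (perpGrad H) X Ω)
    (hH : ContDiff ℝ 2 H) {K : Set ℝ²} (hK : IsCompact K) (hKc : Convex ℝ K) (hΩK : Ω ⊆ K)
    (hc₀ : 0 < c₀) (hgrad : ∀ z ∈ Ω, c₀ ≤ ‖∇ H z‖) :
    ∃ δ > 0, ∃ C, ∀ x ∈ Ω, ∀ y ∈ Ω, dist x y ≤ δ → ∀ t, 0 ≤ t →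
      dist (X t x) (X t y) ≤ C * (1 + t) * dist x y := by
  obtain ⟨Λ, hΛ, hHlip⟩ := (hH.of_le one_le_two).exists_norm_fderiv_le_and_lipschitzOnWith hK hKc
  obtain ⟨D, hD, hblip⟩ :=
    (hH.perpGrad (m := 1) (by norm_num)).exists_norm_fderiv_le_and_lipschitzOnWith hK hKc
  obtain ⟨M, -, hM⟩ :=
    (hH.gradient (m := 1) (by norm_num)).exists_norm_fderiv_le_and_lipschitzOnWith hK hKc
  obtain ⟨ε₁, hε₁0, hε₁⟩ := exists_pos_mul_lt (pow_pos hc₀ 4) (2 * D * Λ * (c₀ ^ 2 + 2 * Λ ^ 2))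
  obtain ⟨ε₂, hε₂0, hε₂⟩ := exists_pos_mul_lt (pow_pos hc₀ 3) (2 * M * (c₀ ^ 2 + 2 * Λ ^ 2))
  set ε := min ε₁ ε₂
  set A := exp D * (2 * Λ / c₀) with hA
  have hA0 : 0 ≤ A := by positivity
  set κ : ℝ := 2 * Λ / c₀ ^ 2
  refine ⟨ε / (1 + A), by positivity, (1 + Λ * κ) * (1 + A), fun x hx y hy hxy t ht ↦ ?_⟩
  have hcorr := hX.phaseCorrectable_perpGrad hH hc₀ hgrad
    (fun z hz ↦ norm_gradient H z ▸ hΛ z (hΩK hz)) (fun z hz ↦ hD z (hΩK hz))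
    (fun p hp w hw ↦ abs_sub_sub_inner_gradient_le hKc
      (fun z _ ↦ hH.differentiable two_ne_zero z) hM (hΩK hp) (hΩK hw))
    ((mul_le_mul_of_nonneg_left (min_le_left _ _) (by positivity)).trans hε₁.le)
    ((mul_le_mul_of_nonneg_left (min_le_right _ _) (by positivity)).trans hε₂.le) hx hy
  have hρ : exp D * (2 * |H y - H x| / c₀) ≤ A * dist y x := by
    have := hHlip.dist_le_mul y (hΩK hy) x (hΩK hx)
    rw [Real.dist_eq] at this
    calc exp D * (2 * |H y - H x| / c₀) ≤ exp D * (2 * (Λ * dist y x) / c₀) := by gcongr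
      _ = A * dist y x := by rw [hA]; ring
  rw [dist_comm x y, le_div_iff₀ (by positivity)] at hxy
  have hyx : dist y x ≤ ε := by nlinarith [dist_nonneg (x := y) (y := x)]
  have hρε : exp D * (2 * |H y - H x| / c₀) ≤ ε := by nlinarith [dist_nonneg (x := y) (y := x)]
  have := hX.dist_le_of_phaseCorrectable hx hy
    (fun z hz ↦ norm_perpGrad H z ▸ norm_gradient H z ▸ hΛ z (hΩK hz)) (hblip.mono hΩK)
    (by positivity) hcorr hyx hρε ht
  rw [dist_comm, dist_comm x]
  have hΛκ : 0 ≤ Λ * κ := by positivity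
  nlinarith [mul_le_mul_of_nonneg_left hρ (mul_nonneg hΛκ ht), dist_nonneg (x := y) (y := x),
    mul_nonneg (mul_nonneg hΛκ hA0) (dist_nonneg (x := y) (y := x)),
    mul_nonneg (mul_nonneg ht hA0) (dist_nonneg (x := y) (y := x)),
    mul_nonneg (mul_nonneg hΛκ ht) (dist_nonneg (x := y) (y := x)),
    mul_nonneg ht (dist_nonneg (x := y) (y := x))]

end IsInvariantFlow

theorem stmt_11_general
    (c₀ : ℝ) (hc₀ : 0 < c₀)
    (H : EuclideanSpace ℝ (Fin 2) → ℝ) (hH : ContDiff ℝ 2 H)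
    (Ω₀ : Set (EuclideanSpace ℝ (Fin 2)))
    (hΩ₀comp : IsCompact (closure Ω₀))
    (hgrad : ∀ x ∈ closure Ω₀, c₀ ≤ ‖gradient H x‖)
    (X : ℝ → EuclideanSpace ℝ (Fin 2) → EuclideanSpace ℝ (Fin 2))
    (hX0 : ∀ x, X 0 x = x)
    (hflow : ∀ x ∈ Ω₀, ∀ t : ℝ, HasDerivAt (fun s => X s x) (perpGrad H (X t x)) t)
    (hΩinv : ∀ t : ℝ, X t '' Ω₀ = Ω₀) :
    ∃ C > (0:ℝ), ∀ x ∈ Ω₀, ∀ y ∈ Ω₀, ∀ t : ℝ, 0 ≤ t →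
      dist (X t x) (X t y) ≤ C * (1 + t) * dist x y := by
  have hbdd : Bornology.IsBounded Ω₀ := hΩ₀comp.isBounded.subset subset_closure
  have hX : IsInvariantFlow (perpGrad H) X Ω₀ :=
    ⟨hflow, fun t ↦ mapsTo_iff_image_subset.2 (hΩinv t).subset, fun x _ ↦ hX0 x⟩
  obtain ⟨r, hr⟩ := hbdd.subset_closedBall 0
  obtain ⟨δ, hδ, C, hloc⟩ := hX.exists_dist_le_mul_one_add_of_dist_le hH
    (isCompact_closedBall 0 r) (convex_closedBall 0 r) hr hc₀ fun z hz ↦ hgrad z (subset_closure hz)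
  exact exists_pos_dist_le_mul_one_add_of_isBounded hbdd hX.mapsTo hδ hloc

/-- Linear-in-time Lipschitz growth of the flow on a good invariant component:
if `H ∈ C²`, `Ω₀` is a connected component of `H⁻¹((h₀,h₁))` with `|∇H| ≥ c₀ > 0`
on it, and `X` is the flow of `b = ∇⊥H` leaving `Ω₀` invariant, then there is `C`
with `dist(X(t,x), X(t,y)) ≤ C(1+t)·dist(x,y)` for all `x, y ∈ Ω₀` and `t ≥ 0`. -/
theorem stmt_11
    (h₀ h₁ c₀ : ℝ) (hh : h₀ < h₁) (hc₀ : 0 < c₀)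
    (H : EuclideanSpace ℝ (Fin 2) → ℝ) (hH : ContDiff ℝ 2 H)
    (Ω₀ : Set (EuclideanSpace ℝ (Fin 2)))
    (hΩ₀conn : IsConnected Ω₀) (hΩ₀open : IsOpen Ω₀)
    (hΩ₀comp : IsCompact (closure Ω₀))
    (hΩ₀max : ∀ V : Set (EuclideanSpace ℝ (Fin 2)), IsConnected V →
      V ⊆ H ⁻¹' (Ioo h₀ h₁) → Ω₀ ⊆ V → V = Ω₀)  -- `Ω₀` is a connected component
    (hΩ₀sub : Ω₀ ⊆ H ⁻¹' (Ioo h₀ h₁))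
    (hgrad : ∀ x ∈ closure Ω₀, c₀ ≤ ‖gradient H x‖)
    (X : ℝ → EuclideanSpace ℝ (Fin 2) → EuclideanSpace ℝ (Fin 2))
    (hX0 : ∀ x, X 0 x = x)
    (hflow : ∀ x ∈ Ω₀, ∀ t : ℝ, HasDerivAt (fun s => X s x) (perpGrad H (X t x)) t)
    (hΩinv : ∀ t : ℝ, X t '' Ω₀ = Ω₀) :
    ∃ C > (0:ℝ), ∀ x ∈ Ω₀, ∀ y ∈ Ω₀, ∀ t : ℝ, 0 ≤ t →
      dist (X t x) (X t y) ≤ C * (1 + t) * dist x y :=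
  stmt_11_general c₀ hc₀ H hH Ω₀ hΩ₀comp hgrad X hX0 hflow hΩinv
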